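/- Let v be an ultrafilter on ℕ containing the set S of squarefree numbers and u any ultrafilter on ℕ. Then v strongly divides u·u if and only if v strongly divides u. In fact S ∩ D(u·u) ⊆ D(u). -/

import Mathlib

/-- x·A = {x*a : a ∈ A} in ℕ+. -/
def pmul (x : ℕ+) (A : Set ℕ+) : Set ℕ+ := (x * ·) '' A

/-- xℕ, the set of positive multiples of x. -/
def mulsOf (x : ℕ+) : Set ℕ+ := {n | x ∣ n}

/-- D(u) = {x : xℕ ∈ u}. -/
def Dset (u : Ultrafilter ℕ+) : Set ℕ+ := {x | mulsOf x ∈ u}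

/-- v strongly divides u: D(u) ∈ v. -/
def SDvd (v u : Ultrafilter ℕ+) : Prop := Dset u ∈ v

/-- Membership in the quotient u/v:  A ∈ u/v iff {x : x·A ∈ u} ∈ v. -/
def quotMem (u v : Ultrafilter ℕ+) (A : Set ℕ+) : Prop := {x | pmul x A ∈ u} ∈ v

attribute [local instance] Ultrafilter.mul

/-! `S ∩ D(u·u) ⊆ D(u)`: a squarefree `x` has `xℕ = ⋂_{p ∣ x} pℕ`, so it suffices to treat a
prime `p`. There the complement of `pℕ` is multiplicatively closed, hence lies in `u·u` as soon as
it lies in `u`; so `pℕ ∈ u·u` forces `pℕ ∈ u`. The converse inclusion `D(u) ⊆ D(u·u)` holds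
because `xℕ` is an ideal. -/

namespace Ultrafilter

variable {M : Type*} [Mul M] {s : Set M}

lemma mem_mul_of_mem_left (hs : ∀ a ∈ s, ∀ b, a * b ∈ s) {u : Ultrafilter M} (h : s ∈ u)
    (v : Ultrafilter M) : s ∈ u * v :=
  (eventually_mul u v _).2 <| u.mem_of_superset h fun a ha => .of_forall (hs a ha)

lemma mem_mul_self_of_mem (hs : ∀ a ∈ s, ∀ b ∈ s, a * b ∈ s) {u : Ultrafilter M} (h : s ∈ u) :
    s ∈ u * u :=
  (eventually_mul u u _).2 <| u.mem_of_superset h fun a ha => u.mem_of_superset h (hs a ha)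

lemma mem_of_mem_mul_self (hs : ∀ a ∉ s, ∀ b ∉ s, a * b ∉ s) {u : Ultrafilter M}
    (h : s ∈ u * u) : s ∈ u := by
  by_contra hu
  have hcompl : sᶜ ∈ u * u := mem_mul_self_of_mem hs (compl_mem_iff_notMem.2 hu)
  exact compl_notMem_iff.2 h hcompl

end Ultrafilter

lemma Dset_subset_Dset_mul (u v : Ultrafilter ℕ+) : Dset u ⊆ Dset (u * v) :=
  fun _ hx => Ultrafilter.mem_mul_of_mem_left (fun _ ha b => ha.mul_right b) hx v

lemma setOf_prime_dvd_mem_of_mem_mul_self {p : ℕ} (hp : p.Prime) {u : Ultrafilter ℕ+}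
    (h : {n : ℕ+ | p ∣ (n : ℕ)} ∈ u * u) : {n : ℕ+ | p ∣ (n : ℕ)} ∈ u :=
  Ultrafilter.mem_of_mem_mul_self (fun a ha b hb hab => by
    simp only [Set.mem_ofPred_eq, PNat.mul_coe] at ha hb hab
    exact (hp.dvd_mul.1 hab).elim ha hb) h

lemma mulsOf_eq_biInter_primeFactors {x : ℕ+} (hx : Squarefree (x : ℕ)) :
    mulsOf x = ⋂ p ∈ (x : ℕ).primeFactors, {n : ℕ+ | p ∣ (n : ℕ)} := by
  ext n
  simp only [mulsOf, Set.mem_ofPred_eq, Set.mem_iInter, PNat.dvd_iff]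
  refine ⟨fun hxn p hp => (Nat.dvd_of_mem_primeFactors hp).trans hxn, fun hn => ?_⟩
  rw [← Nat.prod_primeFactors_of_squarefree hx]
  exact Finset.prod_primes_dvd _ (fun p hp => (Nat.prime_of_mem_primeFactors hp).prime) hn

lemma squarefree_inter_Dset_mul_self_subset (u : Ultrafilter ℕ+) :
    {x : ℕ+ | Squarefree (x : ℕ)} ∩ Dset (u * u) ⊆ Dset u := by
  rintro x ⟨hx, hxu⟩
  simp only [Dset, Set.mem_ofPred_eq, mulsOf_eq_biInter_primeFactors hx] at hxu ⊢
  refine (Filter.biInter_finset_mem _).2 fun p hp => ?_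
  exact setOf_prime_dvd_mem_of_mem_mul_self (Nat.prime_of_mem_primeFactors hp)
    ((Filter.biInter_finset_mem _).1 hxu p hp)

theorem stmt16 (v u : Ultrafilter ℕ+) (hv : {x : ℕ+ | Squarefree (x : ℕ)} ∈ v) :
    (SDvd v (u * u) ↔ SDvd v u) ∧
      {x : ℕ+ | Squarefree (x : ℕ)} ∩ Dset (u * u) ⊆ Dset u := by
  have hsub := squarefree_inter_Dset_mul_self_subset u
  refine ⟨⟨fun h => ?_, fun h => v.mem_of_superset h (Dset_subset_Dset_mul u u)⟩, hsub⟩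
  exact v.mem_of_superset (Filter.inter_mem hv h) hsub
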